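/- arXiv:1809.05253 — 2 statements merged into one kernel-verified Lean document; each statement's English description precedes it below -/
import Mathlib

section
/- Let {A_0,...,A_7} be symmetric subsets of a finite abelian group G satisfying (a1) (pairwise disjoint) and (a2) (union = G∖{0}), and define D_0 = A_4∪A_1∪A_2∪A_3, D_1 = A_5∪A_0∪A_2∪A_3, D_2 = A_6∪A_0∪A_1∪A_3, D_3 = A_7∪A_0∪A_1∪A_2. Then {D_0,D_1,D_2,D_3} is a symmetric difference family of type H if and only if condition (a4) holds: Σ_{i=0}^{7}A_i² − Σ_{i=0}^{7}A_i·A_{i+4} = (|G|−1)·0 + Σ_{i=0}^{3}A_i − Σ_{i=4}^{7}A_i in ℤ[G] (indices mod 8). -/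
open Finset

noncomputable section

variable {G : Type*}

/-- The element of the group ring `ℤ[G]` associated to a finite subset `D ⊆ G`. -/
def grp [AddCommGroup G] [DecidableEq G] (D : Finset G) : AddMonoidAlgebra ℤ G :=
  ∑ x ∈ D, AddMonoidAlgebra.single x 1

/-- `D^{(-1)} = {-x : x ∈ D}`. -/
def negSet [AddCommGroup G] [DecidableEq G] (D : Finset G) : Finset G :=
  D.image (fun x => -x)

/-- A subset is symmetric if `D = -D`. -/
def IsSymmetric [AddCommGroup G] [DecidableEq G] (D : Finset G) : Prop :=
  negSet D = D

/-- `G* = G \ {0}` as a finset. -/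
def Gstar (G : Type*) [AddCommGroup G] [Fintype G] [DecidableEq G] : Finset G :=
  Finset.univ \ {0}

/-- A difference family of type `H`: four blocks with `λ = Σ|D_i| - |G|`. -/
def IsTypeH [AddCommGroup G] [Fintype G] [DecidableEq G] (D : Fin 4 → Finset G) : Prop :=
  ∑ i, grp (D i) * grp (negSet (D i)) =
    ((∑ i, ((D i).card : ℤ)) - (Fintype.card G : ℤ)) • grp (Finset.univ : Finset G)
      + (Fintype.card G : ℤ) • AddMonoidAlgebra.single (0 : G) (1 : ℤ)

/-- A difference family of type `H_4^*`: four blocks with `λ = Σ|B_i| - (|G|+1)`. -/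
def IsTypeH4star [AddCommGroup G] [Fintype G] [DecidableEq G] (B : Fin 4 → Finset G) : Prop :=
  ∑ i, grp (B i) * grp (negSet (B i)) =
    ((∑ i, ((B i).card : ℤ)) - ((Fintype.card G : ℤ) + 1)) • grp (Finset.univ : Finset G)
      + ((Fintype.card G : ℤ) + 1) • AddMonoidAlgebra.single (0 : G) (1 : ℤ)

/-- A difference family of type `H_2^*`: two blocks with `λ = Σ|S_i| - (|G|+1)/2`. -/
def IsTypeH2star [AddCommGroup G] [Fintype G] [DecidableEq G] (S : Fin 2 → Finset G) : Prop :=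
  ∑ i, grp (S i) * grp (negSet (S i)) =
    ((∑ i, ((S i).card : ℤ)) - ((Fintype.card G : ℤ) + 1) / 2) • grp (Finset.univ : Finset G)
      + (((Fintype.card G : ℤ) + 1) / 2) • AddMonoidAlgebra.single (0 : G) (1 : ℤ)

/-- Condition (d3). -/
def CondD3 [AddCommGroup G] [Fintype G] [DecidableEq G] (D : Fin 4 → Finset G) : Prop :=
  grp (D 0) * grp (negSet (D 2)) + grp (D 2) * grp (negSet (D 0))
    + grp (D 1) * grp (negSet (D 3)) + grp (D 3) * grp (negSet (D 1)) =
    ((∑ i, ((D i).card : ℤ)) - (Fintype.card G : ℤ) + 1) • grp (Finset.univ : Finset G)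

/-- Condition (c1). -/
def CondC1 [AddCommGroup G] [Fintype G] [DecidableEq G] (S : Fin 4 → Finset G) : Prop :=
  grp (S 0) * grp (negSet (S 2)) + grp (S 2) * grp (negSet (S 0))
    + grp (S 1) * grp (negSet (S 3)) + grp (S 3) * grp (negSet (S 1)) =
    ((∑ i, ((S i).card : ℤ)) - (Fintype.card G : ℤ)) • grp (Finset.univ : Finset G)

/-- Condition (d2). -/
def CondD2 [AddCommGroup G] [Fintype G] [DecidableEq G] (D : Fin 4 → Finset G) : Prop :=
  ∃ E₀ E₁ : Finset G, E₀ ⊆ Gstar G ∧ E₁ ⊆ Gstar G ∧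
    grp (D 0) + grp (D 1) - grp (D 2) - grp (D 3) = grp E₀ - grp (Gstar G \ E₀) ∧
    grp (D 0) + grp (D 3) - grp (D 1) - grp (D 2) = grp E₁ - grp (Gstar G \ E₁) ∧
    IsTypeH4star ![E₀, E₁, Gstar G \ E₀, Gstar G \ E₁]

/-- A building family: eight symmetric, pairwise disjoint subsets partitioning `G*`,
satisfying (a3) and (a4). -/
def IsBuildingFamily [AddCommGroup G] [Fintype G] [DecidableEq G] (A : Fin 8 → Finset G) : Prop :=
  (∀ i, IsSymmetric (A i)) ∧
  (∀ i j, i ≠ j → Disjoint (A i) (A j)) ∧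
  (Finset.univ.biUnion A = Gstar G) ∧
  IsTypeH4star ![A 0 ∪ A 1 ∪ A 6 ∪ A 7, A 2 ∪ A 3 ∪ A 4 ∪ A 5,
    A 0 ∪ A 3 ∪ A 5 ∪ A 6, A 1 ∪ A 2 ∪ A 4 ∪ A 7] ∧
  (∑ i, grp (A i) * grp (A i)) - (∑ i, grp (A i) * grp (A (i + 4))) =
    ((Fintype.card G : ℤ) - 1) • AddMonoidAlgebra.single (0 : G) (1 : ℤ)
      + ((grp (A 0) + grp (A 1) + grp (A 2) + grp (A 3))
        - (grp (A 4) + grp (A 5) + grp (A 6) + grp (A 7)))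

end
/-!
Write `a i = grp (A i)`, `P = a 0 + a 1 + a 2 + a 3` and `Q = a 4 + a 5 + a 6 + a 7`. By (a1) and (a2),
`P + Q = G - 1`, and `D i = P - a i + a (i + 4)`. Since every `D i` is symmetric,
`D i · D i^(-1) = (D i)²`, and expanding gives `Σ (D i)² = 2P(P + Q) + (Σ aᵢ² - Σ aᵢ aᵢ₊₄)`.
On the other side, `S · G = |S| G` for every subset `S`, so the right-hand side of type `H` is
`(Σ D i) G - G² + |G| = (3P + Q)(P + Q + 1) - (P + Q + 1)² + |G|`. Comparing the two sides
leaves exactly (a4).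
-/

section GroupRing

open Function

variable {G : Type*} [AddCommGroup G] [DecidableEq G]

lemma grp_union {A B : Finset G} (h : Disjoint A B) : grp (A ∪ B) = grp A + grp B :=
  sum_union h

lemma grp_biUnion {ι : Type*} {s : Finset ι} {A : ι → Finset G}
    (h : (s : Set ι).PairwiseDisjoint A) : grp (s.biUnion A) = ∑ i ∈ s, grp (A i) :=
  sum_biUnion h

lemma grp_union_four {ι : Type*} {A : ι → Finset G} (hA : Pairwise (Disjoint on A))
    (i j k l : ι) (h : [i, j, k, l].Nodup) :
    grp (A i ∪ A j ∪ A k ∪ A l) = grp (A i) + grp (A j) + grp (A k) + grp (A l) := by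
  simp only [List.nodup_cons, List.mem_cons, List.not_mem_nil, or_false, not_or] at h
  obtain ⟨⟨hij, hik, hil⟩, ⟨hjk, hjl⟩, hkl, -⟩ := h
  rw [grp_union, grp_union, grp_union (hA hij)]
  · exact disjoint_union_left.2 ⟨hA hik, hA hjk⟩
  · exact disjoint_union_left.2 ⟨disjoint_union_left.2 ⟨hA hil, hA hjl⟩, hA hkl⟩

lemma IsSymmetric.union {A B : Finset G} (hA : IsSymmetric A) (hB : IsSymmetric B) :
    IsSymmetric (A ∪ B) := by
  rw [IsSymmetric, negSet, image_union]
  exact congrArg₂ (· ∪ ·) hA hB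

variable [Fintype G]

lemma single_mul_grp_univ (x : G) :
    AddMonoidAlgebra.single x (1 : ℤ) * grp (univ : Finset G) = grp univ := by
  simp only [grp, mul_sum, AddMonoidAlgebra.single_mul_single, one_mul]
  exact Fintype.sum_equiv (Equiv.addLeft x) _ _ fun _ => rfl

lemma grp_mul_grp_univ (S : Finset G) : grp S * grp univ = (#S : ℤ) • grp univ := by
  rw [grp, sum_mul]
  simp only [single_mul_grp_univ, sum_const, natCast_zsmul]

lemma grp_Gstar : grp (Gstar G) = grp (univ : Finset G) - 1 := by
  rw [Gstar, grp, grp, sum_sdiff_eq_sub (subset_univ _), sum_singleton,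
    AddMonoidAlgebra.one_def]

lemma isTypeH_iff_of_isSymmetric {D : Fin 4 → Finset G} (hD : ∀ i, IsSymmetric (D i)) :
    IsTypeH D ↔ ∑ i, grp (D i) * grp (D i) =
      (∑ i, grp (D i)) * grp univ - grp univ * grp univ
        + (Fintype.card G : ℤ) • AddMonoidAlgebra.single (0 : G) (1 : ℤ) := by
  have hneg : ∀ i, negSet (D i) = D i := hD
  simp only [IsTypeH, hneg, sub_smul, sum_smul, sum_mul, grp_mul_grp_univ,
    card_univ]

end GroupRing

lemma sum_sq_blocks {R : Type*} [CommRing R] (a : Fin 8 → R) :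
    (a 4 + a 1 + a 2 + a 3) ^ 2 + (a 5 + a 0 + a 2 + a 3) ^ 2
      + (a 6 + a 0 + a 1 + a 3) ^ 2 + (a 7 + a 0 + a 1 + a 2) ^ 2 =
    2 * (a 0 + a 1 + a 2 + a 3) * (∑ i, a i)
      + ((∑ i, a i * a i) - ∑ i, a i * a (i + 4)) := by
  simp only [Fin.sum_univ_eight, Fin.reduceAdd]
  ring

/-- with (a1), (a2) and symmetry, the derived family `{D_i}` is a symmetric
difference family of type `H` iff (a4) holds. -/
theorem typeH_iff_a4 {G : Type*} [AddCommGroup G] [Fintype G] [DecidableEq G]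
    (A : Fin 8 → Finset G) (hsym : ∀ i, IsSymmetric (A i))
    (ha1 : ∀ i j, i ≠ j → Disjoint (A i) (A j))
    (ha2 : Finset.univ.biUnion A = Gstar G) :
    IsTypeH ![A 4 ∪ A 1 ∪ A 2 ∪ A 3, A 5 ∪ A 0 ∪ A 2 ∪ A 3,
        A 6 ∪ A 0 ∪ A 1 ∪ A 3, A 7 ∪ A 0 ∪ A 1 ∪ A 2] ↔
      (∑ i, grp (A i) * grp (A i)) - (∑ i, grp (A i) * grp (A (i + 4))) =
        ((Fintype.card G : ℤ) - 1) • AddMonoidAlgebra.single (0 : G) (1 : ℤ)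
          + ((grp (A 0) + grp (A 1) + grp (A 2) + grp (A 3))
            - (grp (A 4) + grp (A 5) + grp (A 6) + grp (A 7))) := by
  have hsymD : ∀ i, IsSymmetric (![A 4 ∪ A 1 ∪ A 2 ∪ A 3, A 5 ∪ A 0 ∪ A 2 ∪ A 3,
      A 6 ∪ A 0 ∪ A 1 ∪ A 3, A 7 ∪ A 0 ∪ A 1 ∪ A 2] i) := by
    intro i
    fin_cases i <;> exact (((hsym _).union (hsym _)).union (hsym _)).union (hsym _)
  have hunion : ∑ i, grp (A i) = grp univ - 1 := by
    rw [← grp_Gstar, ← ha2, grp_biUnion fun i _ j _ => ha1 i j]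
  rw [isTypeH_iff_of_isSymmetric hsymD]
  simp only [Fin.sum_univ_four, Matrix.cons_val_zero, Matrix.cons_val_one, Matrix.cons_val_two,
    Matrix.cons_val_three, Matrix.head_cons, Matrix.tail_cons]
  rw [grp_union_four ha1 4 1 2 3 (by decide), grp_union_four ha1 5 0 2 3 (by decide),
    grp_union_four ha1 6 0 1 3 (by decide), grp_union_four ha1 7 0 1 2 (by decide)]
  simp only [← AddMonoidAlgebra.one_def, zsmul_eq_mul, Int.cast_sub, Int.cast_natCast,
    Int.cast_one, mul_one]
  have hsq := sum_sq_blocks fun i => grp (A i)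
  rw [Fin.sum_univ_eight fun i => grp (A i)] at hunion hsq
  -- With `U = grp univ`, the two conditions differ by `(U - 2P + 1) · (P + Q - (U - 1))`.
  constructor <;> intro h
  · linear_combination h - hsq
      + (grp univ - 2 * (grp (A 0) + grp (A 1) + grp (A 2) + grp (A 3)) + 1) * hunion
  · linear_combination h + hsq
      - (grp univ - 2 * (grp (A 0) + grp (A 1) + grp (A 2) + grp (A 3)) + 1) * hunion
end

section
/- Let q ≡ 1 (mod 4) be a prime power, q = 4m+1, ω a primitive element of F_{q²}, and C_i = C_i^{(4,q²)} = ω^i⟨ω^4⟩ the fourth-power cyclotomic classes of F_{q²}. Then the four sets E_0 = C_2^{(4,q²)} ∪ C_{2m+3}^{(4,q²)}, Ē_0 = C_0^{(4,q²)} ∪ C_{2m+1}^{(4,q²)}, E_1 = C_2^{(4,q²)} ∪ C_{2m+1}^{(4,q²)}, Ē_1 = C_0^{(4,q²)} ∪ C_{2m+3}^{(4,q²)} form a difference family of type H_4* in the additive group (F_{q²},+): Σ of squares of these four sets equals 2(q²−1)·0 + (q²−3)·F_{q²}* in ℤ[F_{q²}]. -/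
open Finset

noncomputable section MyHelpers
set_option linter.unusedSectionVars false
open AddMonoidAlgebra

section Generic
variable {G : Type*} [AddCommGroup G] [Fintype G] [DecidableEq G]

lemma myMem_gstar {x : G} : x ∈ Gstar G ↔ x ≠ 0 := by simp [Gstar]

lemma myGrp_union {X Y : Finset G} (h : Disjoint X Y) : grp (X ∪ Y) = grp X + grp Y := by
  unfold grp; rw [Finset.sum_union h]

lemma myGrp_mul (X Y : Finset G) :
    grp X * grp Y = ∑ x ∈ X, ∑ y ∈ Y, AddMonoidAlgebra.single (x + y) (1 : ℤ) := by
  unfold grp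
  rw [Finset.sum_mul_sum]
  simp [AddMonoidAlgebra.single_mul_single]

lemma myGrp_univ :
    grp (Finset.univ : Finset G) = AddMonoidAlgebra.single (0:G) (1:ℤ) + grp (Gstar G) := by
  unfold grp
  rw [Gstar, eq_comm, add_comm, Finset.sum_sdiff_eq_sub (Finset.subset_univ _)]
  simp

lemma myCard_gstar : (Gstar G).card = Fintype.card G - 1 := by
  rw [Gstar, Finset.card_sdiff_of_subset (by simp)]; simp

lemma myGstar_sq :
    grp (Gstar G) * grp (Gstar G) =
      ((Fintype.card G : ℤ) - 2) • grp (Gstar G)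
        + ((Fintype.card G : ℤ) - 1) • AddMonoidAlgebra.single (0:G) (1:ℤ) := by
  have step : ∀ x : G, ∑ y ∈ Gstar G, AddMonoidAlgebra.single (x + y) (1:ℤ)
      = grp (Finset.univ : Finset G) - AddMonoidAlgebra.single x (1:ℤ) := by
    intro x
    have h1 : ∑ y ∈ (Finset.univ : Finset G), AddMonoidAlgebra.single (x + y) (1:ℤ)
        = grp (Finset.univ : Finset G) := by
      unfold grp
      exact Fintype.sum_equiv (Equiv.addLeft x) _ _ (fun y => rfl)
    rw [Gstar, Finset.sum_sdiff_eq_sub (Finset.subset_univ _), h1]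
    simp
  rw [myGrp_mul]
  rw [Finset.sum_congr rfl (fun x _ => step x), Finset.sum_sub_distrib, Finset.sum_const,
    myCard_gstar]
  have hpos : 1 ≤ Fintype.card G := Fintype.card_pos
  have hc : ((Fintype.card G - 1 : ℕ) : ℤ) = (Fintype.card G : ℤ) - 1 := by
    push_cast [hpos]; ring
  rw [← grp, ← natCast_zsmul, hc, myGrp_univ]
  rw [smul_add]
  module

end Generic

section FieldHelpers
variable {F : Type*} [Field F] [Fintype F] [DecidableEq F]

lemma mySum_gstar_mul {M : Type*} [AddCommMonoid M] (f : F → M) {c : F} (hc : c ≠ 0) :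
    ∑ x ∈ Gstar F, f (c * x) = ∑ x ∈ Gstar F, f x := by
  apply Finset.sum_nbij' (i := fun x => c * x) (j := fun x => c⁻¹ * x)
  · intro a ha; rw [myMem_gstar] at *; exact mul_ne_zero hc ha
  · intro a ha; rw [myMem_gstar] at *; exact mul_ne_zero (inv_ne_zero hc) ha
  · intro a _; field_simp
  · intro a _; field_simp
  · intro a _; rfl

lemma myKey_square (e o : F → ℤ)
    (h1 : ∀ u y : F, u ≠ 0 → y ≠ 0 → e (u * y) * e y + o (u * y) * o y = e u)
    (h2 : ∑ u ∈ Gstar F, e u = 0) (h3 : e (-1) = 1) :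
    (∑ x ∈ Gstar F, AddMonoidAlgebra.single x (e x))
        * (∑ x ∈ Gstar F, AddMonoidAlgebra.single x (e x))
      + (∑ x ∈ Gstar F, AddMonoidAlgebra.single x (o x))
        * (∑ x ∈ Gstar F, AddMonoidAlgebra.single x (o x))
    = ((Fintype.card F : ℤ) - 1) • AddMonoidAlgebra.single (0:F) (1:ℤ) - grp (Gstar F) := by
  have expand : ∀ φ : F → ℤ,
      (∑ x ∈ Gstar F, AddMonoidAlgebra.single x (φ x))
          * (∑ x ∈ Gstar F, AddMonoidAlgebra.single x (φ x))
      = ∑ y ∈ Gstar F, ∑ x ∈ Gstar F, AddMonoidAlgebra.single (x + y) (φ x * φ y) := by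
    intro φ
    rw [Finset.sum_mul_sum, Finset.sum_comm]
    apply Finset.sum_congr rfl; intro y _
    apply Finset.sum_congr rfl; intro x _
    rw [AddMonoidAlgebra.single_mul_single]
  rw [expand, expand, ← Finset.sum_add_distrib]
  have step1 : ∀ y ∈ Gstar F,
      (∑ x ∈ Gstar F, AddMonoidAlgebra.single (x + y) (e x * e y))
        + (∑ x ∈ Gstar F, AddMonoidAlgebra.single (x + y) (o x * o y))
      = ∑ u ∈ Gstar F, AddMonoidAlgebra.single ((u + 1) * y) (e u) := by
    intro y hy
    rw [myMem_gstar] at hy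
    rw [← Finset.sum_add_distrib]
    have hre : ∀ φ2 : F → AddMonoidAlgebra ℤ F,
        ∑ u ∈ Gstar F, φ2 u = ∑ x ∈ Gstar F, φ2 (x * y⁻¹) := by
      intro φ2
      have := mySum_gstar_mul (fun x => φ2 (x * y⁻¹)) (c := y) hy
      rw [← this]
      apply Finset.sum_congr rfl; intro u _
      congr 1
      field_simp
    rw [hre (fun u => AddMonoidAlgebra.single ((u + 1) * y) (e u))]
    apply Finset.sum_congr rfl
    intro x hx
    rw [myMem_gstar] at hx
    have hxy : x * y⁻¹ * y = x := by field_simp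
    have h1' := h1 (x * y⁻¹) y (by simp [hx, inv_ne_zero hy, mul_ne_zero]) hy
    rw [hxy] at h1'
    rw [← AddMonoidAlgebra.single_add, h1']
    congr 1
    field_simp
  rw [Finset.sum_congr rfl step1, Finset.sum_comm]
  have hm1 : (-1 : F) ∈ Gstar F := myMem_gstar.2 (by norm_num)
  rw [← Finset.add_sum_erase _ _ hm1]
  have hterm : ∑ y ∈ Gstar F, AddMonoidAlgebra.single (((-1:F) + 1) * y) (e (-1))
      = ((Fintype.card F : ℤ) - 1) • AddMonoidAlgebra.single (0:F) (1:ℤ) := by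
    have hv : ∀ y : F, AddMonoidAlgebra.single (((-1:F) + 1) * y) (e (-1))
        = AddMonoidAlgebra.single (0:F) (1:ℤ) := by
      intro y; rw [h3]; norm_num
    rw [Finset.sum_congr rfl (fun y _ => hv y), Finset.sum_const, myCard_gstar, ← natCast_zsmul]
    congr 1
    have hpos : 1 ≤ Fintype.card F := Fintype.card_pos
    push_cast [hpos]; ring
  have hrest : ∑ u ∈ (Gstar F).erase (-1),
      (∑ y ∈ Gstar F, AddMonoidAlgebra.single ((u + 1) * y) (e u))
      = - grp (Gstar F) := by
    have hinner : ∀ u ∈ (Gstar F).erase (-1),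
        (∑ y ∈ Gstar F, AddMonoidAlgebra.single ((u + 1) * y) (e u))
        = e u • grp (Gstar F) := by
      intro u hu
      have hu1 : u ≠ -1 := (Finset.mem_erase.1 hu).1
      have hu1' : u + 1 ≠ 0 := by
        intro h; apply hu1; linear_combination h
      rw [mySum_gstar_mul (fun z => AddMonoidAlgebra.single z (e u)) hu1']
      unfold grp
      rw [Finset.smul_sum]
      apply Finset.sum_congr rfl
      intro y _
      rw [AddMonoidAlgebra.smul_single]
      norm_num
    rw [Finset.sum_congr rfl hinner, ← Finset.sum_smul]
    have hsum : ∑ u ∈ (Gstar F).erase (-1), e u = -1 := by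
      have h4 := Finset.add_sum_erase _ e hm1
      rw [h2] at h4
      rw [h3] at h4
      linarith
    rw [hsum]; module
  rw [hterm, hrest]
  abel

end FieldHelpers
end MyHelpers

/-- the fourth-power cyclotomic construction of a type-`H_4^*` difference
family in the additive group of `F_{q²}`, `q = 4m+1` a prime power.  Here `C i` is the
cyclotomic class `ω^i⟨ω^4⟩`. -/
theorem cyclotomic_H4star_family (q m : ℕ) (hq : q = 4 * m + 1) (hpp : IsPrimePow q)
    {F : Type*} [Field F] [Fintype F] [DecidableEq F]
    (hcard : Fintype.card F = q ^ 2) (ω : Fˣ) (hω : ∀ x : Fˣ, x ∈ Subgroup.zpowers ω)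
    (C : ℕ → Finset F)
    (hC : ∀ i : ℕ, ∀ x : F, x ∈ C i ↔ ∃ j : ℕ, x = (ω : F) ^ (i + 4 * j)) :
    IsTypeH4star ![C 2 ∪ C (2 * m + 3), C 0 ∪ C (2 * m + 1),
        C 2 ∪ C (2 * m + 1), C 0 ∪ C (2 * m + 3)] ∧
      grp (C 2 ∪ C (2 * m + 3)) * grp (C 2 ∪ C (2 * m + 3))
        + grp (C 0 ∪ C (2 * m + 1)) * grp (C 0 ∪ C (2 * m + 1))
        + grp (C 2 ∪ C (2 * m + 1)) * grp (C 2 ∪ C (2 * m + 1))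
        + grp (C 0 ∪ C (2 * m + 3)) * grp (C 0 ∪ C (2 * m + 3)) =
      (2 * ((q : ℤ) ^ 2 - 1)) • AddMonoidAlgebra.single (0 : F) (1 : ℤ)
        + ((q : ℤ) ^ 2 - 3) • grp (Gstar F) := by
  -- basic numeric facts
  have hm1 : 1 ≤ m := by
    have := hpp.one_lt
    omega
  have hsq : q ^ 2 = 16 * m ^ 2 + 8 * m + 1 := by subst hq; ring
  have hω0 : (ω : F) ≠ 0 := ω.ne_zero
  have hpow1 : (ω : F) ^ (q ^ 2 - 1) = 1 := by
    rw [← hcard]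
    exact FiniteField.pow_card_sub_one_eq_one _ hω0
  have horder : orderOf ω = q ^ 2 - 1 := by
    rw [orderOf_eq_card_of_forall_mem_zpowers hω, Nat.card_eq_fintype_card,
      Fintype.card_units, hcard]
  -- exponent injectivity mod 4
  have hinj : ∀ a b : ℕ, (ω : F) ^ a = (ω : F) ^ b → a % 4 = b % 4 := by
    intro a b hab
    have hU : ω ^ a = ω ^ b := by
      apply Units.ext
      rwa [Units.val_pow_eq_pow_val, Units.val_pow_eq_pow_val]
    have hmod : a ≡ b [MOD q ^ 2 - 1] := by
      rw [← horder]
      exact (pow_eq_pow_iff_modEq).1 hU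
    have h4 : (4 : ℕ) ∣ q ^ 2 - 1 := by omega
    exact Nat.ModEq.of_dvd h4 hmod
  -- membership characterization
  have memC : ∀ (n i : ℕ), ((ω : F) ^ n ∈ C i ↔ n % 4 = i % 4) := by
    intro n i
    constructor
    · intro h
      obtain ⟨j, hj⟩ := (hC i _).1 h
      have := hinj n (i + 4 * j) hj
      omega
    · intro h
      rw [hC]
      obtain ⟨k, hk⟩ : ∃ k, (q ^ 2 - 1) * i = 4 * k := by
        have h4 : (4:ℕ) ∣ (q ^ 2 - 1) * i := Dvd.dvd.mul_right (by omega) i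
        exact h4
      have hge : i ≤ (q ^ 2 - 1) * i := Nat.le_mul_of_pos_left i (by omega)
      refine ⟨(n + (q ^ 2 - 1) * i - i) / 4, ?_⟩
      have heq : i + 4 * ((n + (q ^ 2 - 1) * i - i) / 4) = n + (q ^ 2 - 1) * i := by omega
      rw [heq, pow_add, pow_mul, hpow1, one_pow, mul_one]
  have cover : ∀ x : F, x ≠ 0 → ∃ n : ℕ, x = (ω : F) ^ n := by
    intro x hx
    have hmem := hω (Units.mk0 x hx)
    have hfin : IsOfFinOrder ω := isOfFinOrder_of_finite ω
    rw [← hfin.mem_powers_iff_mem_zpowers] at hmem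
    obtain ⟨n, hn⟩ := hmem
    refine ⟨n, ?_⟩
    have := congrArg Units.val hn
    rw [Units.val_pow_eq_pow_val] at this
    simp at this
    exact this.symm
  have mem_ne : ∀ (i : ℕ) (x : F), x ∈ C i → x ≠ 0 := by
    intro i x hx
    obtain ⟨j, hj⟩ := (hC i x).1 hx
    rw [hj]
    exact pow_ne_zero _ hω0
  have hclass : ∀ (i j : ℕ) (x : F), x ∈ C i → x ∈ C j → i % 4 = j % 4 := by
    intro i j x hi hj
    obtain ⟨a, ha⟩ := (hC i x).1 hi
    obtain ⟨b, hb⟩ := (hC j x).1 hj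
    have := hinj (i + 4 * a) (j + 4 * b) (by rw [← ha, ← hb])
    omega
  have disj : ∀ i j : ℕ, i % 4 ≠ j % 4 → Disjoint (C i) (C j) := by
    intro i j hij
    rw [Finset.disjoint_left]
    intro x hxi hxj
    exact hij (hclass i j x hxi hxj)
  have neg1 : (-1 : F) = (ω : F) ^ (8 * m ^ 2 + 4 * m) := by
    have hz2 : ((ω : F) ^ (8 * m ^ 2 + 4 * m)) ^ 2 = 1 := by
      rw [← pow_mul]
      have : (8 * m ^ 2 + 4 * m) * 2 = q ^ 2 - 1 := by omega
      rw [this, hpow1]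
    have hz1 : (ω : F) ^ (8 * m ^ 2 + 4 * m) ≠ 1 := by
      intro h
      have hU : ω ^ (8 * m ^ 2 + 4 * m) = 1 := by
        apply Units.ext
        rw [Units.val_pow_eq_pow_val]
        simpa using h
      have hdvd := orderOf_dvd_of_pow_eq_one hU
      rw [horder] at hdvd
      have := Nat.le_of_dvd (by positivity) hdvd
      omega
    rcases sq_eq_one_iff.1 hz2 with h | h
    · exact absurd h hz1
    · exact h.symm
  have neg_memC0 : (-1 : F) ∈ C 0 := by
    rw [neg1, memC]
    omega
  have neg_mem : ∀ (i : ℕ) (x : F), x ∈ C i → -x ∈ C i := by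
    intro i x hx
    obtain ⟨j, hj⟩ := (hC i x).1 hx
    have hnx : -x = (ω : F) ^ (8 * m ^ 2 + 4 * m + (i + 4 * j)) := by
      rw [pow_add, ← neg1, hj]; ring
    rw [hnx, memC]
    omega
  have negSetC : ∀ i : ℕ, negSet (C i) = C i := by
    intro i
    ext x
    simp only [negSet, Finset.mem_image]
    constructor
    · rintro ⟨a, ha, rfl⟩
      exact neg_mem i a ha
    · intro hx
      exact ⟨-x, neg_mem i x hx, by ring⟩
  have hsubC : ∀ i : ℕ, C i ⊆ Gstar F := by
    intro i x hx
    exact myMem_gstar.2 (mem_ne i x hx)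
  have hpar : (2 * m + 1) % 4 = 1 ∧ (2 * m + 3) % 4 = 3
      ∨ (2 * m + 1) % 4 = 3 ∧ (2 * m + 3) % 4 = 1 := by omega
  -- the partition of Gstar
  have hpartition : Gstar F = C 0 ∪ C 2 ∪ C (2 * m + 1) ∪ C (2 * m + 3) := by
    ext x
    simp only [Finset.mem_union]
    constructor
    · intro hx
      have hx0 : x ≠ 0 := myMem_gstar.1 hx
      obtain ⟨n, rfl⟩ := cover x hx0
      have hmem : ∀ i : ℕ, n % 4 = i % 4 → (ω : F) ^ n ∈ C i := fun i h => (memC n i).2 h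
      rcases hpar with ⟨e1, e2⟩ | ⟨e1, e2⟩ <;>
        rcases (by omega : n % 4 = 0 ∨ n % 4 = 1 ∨ n % 4 = 2 ∨ n % 4 = 3) with h | h | h | h
      · exact Or.inl (Or.inl (Or.inl (hmem 0 (by omega))))
      · exact Or.inl (Or.inr (hmem (2 * m + 1) (by omega)))
      · exact Or.inl (Or.inl (Or.inr (hmem 2 (by omega))))
      · exact Or.inr (hmem (2 * m + 3) (by omega))
      · exact Or.inl (Or.inl (Or.inl (hmem 0 (by omega))))
      · exact Or.inr (hmem (2 * m + 3) (by omega))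
      · exact Or.inl (Or.inl (Or.inr (hmem 2 (by omega))))
      · exact Or.inl (Or.inr (hmem (2 * m + 1) (by omega)))
    · intro hx
      rcases hx with ((h | h) | h) | h
      · exact hsubC 0 h
      · exact hsubC 2 h
      · exact hsubC (2 * m + 1) h
      · exact hsubC (2 * m + 3) h
  -- disjointness instances
  have d02 : Disjoint (C 0) (C 2) := disj 0 2 (by omega)
  have d0s : Disjoint (C 0) (C (2 * m + 1)) := disj _ _ (by omega)
  have d0t : Disjoint (C 0) (C (2 * m + 3)) := disj _ _ (by omega)
  have d2s : Disjoint (C 2) (C (2 * m + 1)) := disj _ _ (by omega)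
  have d2t : Disjoint (C 2) (C (2 * m + 3)) := disj _ _ (by omega)
  have dst : Disjoint (C (2 * m + 1)) (C (2 * m + 3)) := disj _ _ (by omega)
  -- grp decomposition of Gstar
  have F1 : grp (Gstar F)
      = grp (C 0) + grp (C 2) + grp (C (2 * m + 1)) + grp (C (2 * m + 3)) := by
    rw [hpartition, myGrp_union, myGrp_union, myGrp_union]
    · exact d02
    · rw [Finset.disjoint_union_left]; exact ⟨d0s, d2s⟩
    · rw [Finset.disjoint_union_left, Finset.disjoint_union_left]
      exact ⟨⟨d0t, d2t⟩, dst⟩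
  -- cardinalities
  have hcard02 : (C 0).card = (C 2).card := by
    have himg : C 2 = (C 0).image (fun x => (ω : F) ^ 2 * x) := by
      ext x
      simp only [Finset.mem_image]
      constructor
      · intro hx
        obtain ⟨j, hj⟩ := (hC 2 x).1 hx
        refine ⟨(ω : F) ^ (4 * j), (memC _ 0).2 (by omega), ?_⟩
        rw [hj, ← pow_add]
      · rintro ⟨a, ha, rfl⟩
        obtain ⟨j, hj⟩ := (hC 0 a).1 ha
        rw [hj, ← pow_add]
        exact (memC _ 2).2 (by omega)
    rw [himg, Finset.card_image_of_injective _ (mul_right_injective₀ (pow_ne_zero _ hω0))]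
  have hsum4 : (C 0).card + (C 2).card + (C (2 * m + 1)).card + (C (2 * m + 3)).card
      = q ^ 2 - 1 := by
    have h1 : (Gstar F).card = q ^ 2 - 1 := by rw [myCard_gstar, hcard]
    rw [← h1, hpartition]
    rw [Finset.card_union_of_disjoint, Finset.card_union_of_disjoint,
      Finset.card_union_of_disjoint]
    · exact d02
    · rw [Finset.disjoint_union_left]; exact ⟨d0s, d2s⟩
    · rw [Finset.disjoint_union_left, Finset.disjoint_union_left]
      exact ⟨⟨d0t, d2t⟩, dst⟩
  -- indicator functions
  set e : F → ℤ := fun x => (if x ∈ C 0 then (1:ℤ) else 0) - (if x ∈ C 2 then (1:ℤ) else 0)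
    with he
  set o : F → ℤ := fun x => (if x ∈ C (2 * m + 1) then (1:ℤ) else 0)
    - (if x ∈ C (2 * m + 3) then (1:ℤ) else 0) with ho
  have grpdiff : ∀ i j : ℕ,
      (∑ x ∈ Gstar F, AddMonoidAlgebra.single x
        ((if x ∈ C i then (1:ℤ) else 0) - (if x ∈ C j then (1:ℤ) else 0)))
      = grp (C i) - grp (C j) := by
    intro i j
    have hone : ∀ k : ℕ, (∑ x ∈ Gstar F,
        AddMonoidAlgebra.single x (if x ∈ C k then (1:ℤ) else 0)) = grp (C k) := by
      intro k
      have hstep : ∀ x : F, AddMonoidAlgebra.single x (if x ∈ C k then (1:ℤ) else 0)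
          = if x ∈ C k then AddMonoidAlgebra.single x (1:ℤ) else 0 := by
        intro x; split <;> simp
      rw [Finset.sum_congr rfl (fun x _ => hstep x), Finset.sum_ite_mem]
      have : Gstar F ∩ C k = C k := Finset.inter_eq_right.2 (hsubC k)
      rw [this, grp]
    calc (∑ x ∈ Gstar F, AddMonoidAlgebra.single x
          ((if x ∈ C i then (1:ℤ) else 0) - (if x ∈ C j then (1:ℤ) else 0)))
        = (∑ x ∈ Gstar F, (AddMonoidAlgebra.single x (if x ∈ C i then (1:ℤ) else 0)
            - AddMonoidAlgebra.single x (if x ∈ C j then (1:ℤ) else 0))) := by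
          apply Finset.sum_congr rfl; intro x _
          exact AddMonoidAlgebra.single_sub x _ _
      _ = grp (C i) - grp (C j) := by
          rw [Finset.sum_sub_distrib, hone i, hone j]
  -- hypothesis h1 of key lemma
  have hγ : ∀ u y : F, u ≠ 0 → y ≠ 0 → e (u * y) * e y + o (u * y) * o y = e u := by
    intro u y hu hy
    obtain ⟨a, rfl⟩ := cover u hu
    obtain ⟨b, rfl⟩ := cover y hy
    have hab : (ω : F) ^ a * (ω : F) ^ b = (ω : F) ^ (a + b) := by rw [pow_add]
    rw [he, ho]
    simp only [hab, memC]
    have hmod : (a + b) % 4 = (a % 4 + b % 4) % 4 := Nat.add_mod a b 4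
    rw [hmod]
    rcases hpar with ⟨e1, e2⟩ | ⟨e1, e2⟩ <;> rw [e1, e2] <;>
      rcases (by omega : a % 4 = 0 ∨ a % 4 = 1 ∨ a % 4 = 2 ∨ a % 4 = 3) with h | h | h | h <;>
      rcases (by omega : b % 4 = 0 ∨ b % 4 = 1 ∨ b % 4 = 2 ∨ b % 4 = 3) with h' | h' | h' | h' <;>
      rw [h, h'] <;> norm_num
  -- hypothesis h2
  have hccard : ∀ k : ℕ, (∑ x ∈ Gstar F, (if x ∈ C k then (1:ℤ) else 0)) = (C k).card := by
    intro k
    rw [Finset.sum_ite_mem]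
    have : Gstar F ∩ C k = C k := Finset.inter_eq_right.2 (hsubC k)
    rw [this]
    simp
  have h2' : ∑ u ∈ Gstar F, e u = 0 := by
    rw [he]
    rw [Finset.sum_sub_distrib, hccard 0, hccard 2, hcard02]
    ring
  have h3' : e (-1) = 1 := by
    rw [he]
    have hn2 : (-1 : F) ∉ C 2 := by
      intro h
      have := hclass 0 2 (-1) neg_memC0 h
      omega
    simp [neg_memC0, hn2]
  -- the key identity
  have key := myKey_square e o hγ h2' h3'
  rw [he, ho, grpdiff 0 2, grpdiff (2 * m + 1) (2 * m + 3)] at key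
  have hsq2 := myGstar_sq (G := F)
  have hQ : ((Fintype.card F : ℤ)) = (q : ℤ) ^ 2 := by rw [hcard]; push_cast; ring
  rw [hQ] at key hsq2
  -- union decompositions
  have hB0 : grp (C 2 ∪ C (2 * m + 3)) = grp (C 2) + grp (C (2 * m + 3)) := myGrp_union d2t
  have hB1 : grp (C 0 ∪ C (2 * m + 1)) = grp (C 0) + grp (C (2 * m + 1)) := myGrp_union d0s
  have hB2 : grp (C 2 ∪ C (2 * m + 1)) = grp (C 2) + grp (C (2 * m + 1)) := myGrp_union d2s
  have hB3 : grp (C 0 ∪ C (2 * m + 3)) = grp (C 0) + grp (C (2 * m + 3)) := myGrp_union d0t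
  -- main product identity
  have main2 : grp (C 2 ∪ C (2 * m + 3)) * grp (C 2 ∪ C (2 * m + 3))
        + grp (C 0 ∪ C (2 * m + 1)) * grp (C 0 ∪ C (2 * m + 1))
        + grp (C 2 ∪ C (2 * m + 1)) * grp (C 2 ∪ C (2 * m + 1))
        + grp (C 0 ∪ C (2 * m + 3)) * grp (C 0 ∪ C (2 * m + 3)) =
      (2 * ((q : ℤ) ^ 2 - 1)) • AddMonoidAlgebra.single (0 : F) (1 : ℤ)
        + ((q : ℤ) ^ 2 - 3) • grp (Gstar F) := by
    rw [hB0, hB1, hB2, hB3]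
    simp only [zsmul_eq_mul] at key hsq2 ⊢
    push_cast at key hsq2 ⊢
    linear_combination key + hsq2
      - (grp (Gstar F) + grp (C 0) + grp (C 2) + grp (C (2 * m + 1)) + grp (C (2 * m + 3))) * F1
  refine ⟨?_, main2⟩
  unfold IsTypeH4star
  have negB : ∀ i j : ℕ, negSet (C i ∪ C j) = C i ∪ C j := by
    intro i j
    have himg : negSet (C i ∪ C j) = negSet (C i) ∪ negSet (C j) := Finset.image_union _ _
    rw [himg, negSetC i, negSetC j]
  rw [Fin.sum_univ_four, Fin.sum_univ_four]
  simp only [Matrix.cons_val_zero, Matrix.cons_val_one, Matrix.head_cons, Matrix.cons_val_two,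
    Matrix.tail_cons, Matrix.cons_val_three]
  rw [negB 2 (2 * m + 3), negB 0 (2 * m + 1), negB 2 (2 * m + 1), negB 0 (2 * m + 3)]
  rw [main2, myGrp_univ]
  have hcB0 : (C 2 ∪ C (2 * m + 3)).card = (C 2).card + (C (2 * m + 3)).card :=
    Finset.card_union_of_disjoint d2t
  have hcB1 : (C 0 ∪ C (2 * m + 1)).card = (C 0).card + (C (2 * m + 1)).card :=
    Finset.card_union_of_disjoint d0s
  have hcB2 : (C 2 ∪ C (2 * m + 1)).card = (C 2).card + (C (2 * m + 1)).card :=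
    Finset.card_union_of_disjoint d2s
  have hcB3 : (C 0 ∪ C (2 * m + 3)).card = (C 0).card + (C (2 * m + 3)).card :=
    Finset.card_union_of_disjoint d0t
  rw [hcB0, hcB1, hcB2, hcB3, hQ]
  have h1q : 1 ≤ q ^ 2 := by omega
  have hsumZ : ((C 0).card : ℤ) + ((C 2).card : ℤ) + ((C (2 * m + 1)).card : ℤ)
      + ((C (2 * m + 3)).card : ℤ) = (q : ℤ) ^ 2 - 1 := by
    zify [h1q] at hsum4
    linarith
  have hsumA := congrArg (fun z : ℤ => ((z : ℤ) : AddMonoidAlgebra ℤ F)) hsumZ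
  push_cast at hsumA
  simp only [zsmul_eq_mul]
  push_cast
  linear_combination (-2 : AddMonoidAlgebra ℤ F)
    * (AddMonoidAlgebra.single (0 : F) (1 : ℤ) + grp (Gstar F)) * hsumA
end
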